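/- arXiv:2212.05222 — 2 statements merged into one kernel-verified Lean document; each statement's English description precedes it below -/
import Mathlib

section
/- Let K be a field, N ≥ 2 an integer, and t, X nonzero elements of K with t^2 ≠ 1. Write [n] = (t^n − t^{−n})/(t − t^{−1}) for n ∈ ℤ. Let V be the free K-vector space with basis {v_a : a ∈ ℤ^{N−1}}, with the convention a_N := 0, and define operators E_i, F_i, K_i (1 ≤ i ≤ N−1) by: E_i v_a = [a_i − a_{i+1}] v_{a − e_i}; F_1 v_a = ((X t^{−a_1} − X^{−1} t^{a_1})/(t − t^{−1})) v_{a + e_1} and F_i v_a = [a_{i−1} − a_i] v_{a + e_i} for i ≥ 2; K_1 v_a = X t^{a_2 − 2a_1} v_a and K_i v_a = t^{a_{i−1} + a_{i+1} − 2a_i} v_a for i ≥ 2. Then each K_i is invertible, the K_i pairwise commute, and for all i, j: K_i E_j K_i^{−1} = t^{A_{ij}} E_j and K_i F_j K_i^{−1} = t^{−A_{ij}} F_j, where A is the Cartan matrix of sl_N (A_{ii} = 2, A_{ij} = −1 if |i−j| = 1, and A_{ij} = 0 otherwise). -/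
/-- Quantum integer `[n] = (tⁿ - t⁻ⁿ)/(t - t⁻¹)` (here `t = q^{1/2}`). -/
noncomputable def qint {K : Type*} [Field K] (t : K) (n : ℤ) : K :=
  (t ^ n - t ^ (-n)) / (t - t⁻¹)

/-- For `a = (a_1, …, a_n) ∈ ℤⁿ`, `aEntry a m` is `a_m` for `1 ≤ m ≤ n`, with the
convention that entries outside this range (in particular `a_N = a_{n+1}`) are `0`. -/
def aEntry {n : ℕ} (a : Fin n → ℤ) (m : ℕ) : ℤ :=
  if h : 1 ≤ m ∧ m ≤ n then a ⟨m - 1, by omega⟩ else 0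

/-- The Cartan matrix of `sl_N`: `2` on the diagonal, `−1` on the off-diagonals,
`0` otherwise. -/
def cartanSlN {n : ℕ} (i j : Fin n) : ℤ :=
  if i = j then 2 else if |(i.val : ℤ) - (j.val : ℤ)| = 1 then -1 else 0

private def wfun {n : ℕ} (i : Fin n) (a : Fin n → ℤ) : ℤ :=
  if i.val = 0 then aEntry a 2 - 2 * aEntry a 1
  else aEntry a i.val + aEntry a (i.val + 2) - 2 * aEntry a (i.val + 1)

private lemma aEntry_sub_single {n : ℕ} (a : Fin n → ℤ) (j : Fin n) (m : ℕ) :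
    aEntry (a - Pi.single j 1) m = aEntry a m - (if m = j.val + 1 then 1 else 0) := by
  have hj := j.isLt
  by_cases hm : m = j.val + 1
  · subst hm
    have h : 1 ≤ j.val + 1 ∧ j.val + 1 ≤ n := ⟨by omega, by omega⟩
    simp only [aEntry, dif_pos h, if_pos rfl, Pi.sub_apply]
    have he : (⟨j.val + 1 - 1, by omega⟩ : Fin n) = j := by ext; simp
    rw [he, Pi.single_eq_same]
    simp
  · simp only [aEntry, if_neg hm, sub_zero]
    split_ifs with h
    · simp only [Pi.sub_apply]
      have : (Pi.single j 1 : Fin n → ℤ) ⟨m - 1, by omega⟩ = 0 := by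
        apply Pi.single_eq_of_ne
        rw [ne_eq, Fin.ext_iff]; simp; omega
      rw [this, sub_zero]
    · rfl

private lemma w_sub {n : ℕ} (i j : Fin n) (a : Fin n → ℤ) :
    wfun i (a - Pi.single j 1) = wfun i a + cartanSlN i j := by
  have hj := j.isLt
  have hi := i.isLt
  unfold wfun cartanSlN
  simp only [aEntry_sub_single, Fin.ext_iff, abs_eq (by norm_num : (0:ℤ) ≤ 1)]
  split_ifs <;> omega


/-- On the free module with basis `{v_a : a ∈ ℤ^{N-1}}` with the Verma-module actions of
`E_i`, `F_i`, `K_i` (and `Kinv i = K_i⁻¹`): each `K_i` is invertible, the `K_i` pairwise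
commute, and `K_i E_j K_i⁻¹ = t^{A_{ij}} E_j`, `K_i F_j K_i⁻¹ = t^{−A_{ij}} F_j` where
`A` is the Cartan matrix of `sl_N`. -/
theorem verma_Cartan_relations {K : Type*} [Field K] (N : ℕ) (hN : 2 ≤ N) (t X : K)
    (ht : t ≠ 0) (ht2 : t ^ 2 ≠ 1) (hX : X ≠ 0)
    (E F Kop Kinv : Fin (N - 1) → Module.End K ((Fin (N - 1) → ℤ) →₀ K))
    (hE : ∀ (i : Fin (N - 1)) (a : Fin (N - 1) → ℤ),
      E i (Finsupp.single a 1) =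
        qint t (aEntry a (i.val + 1) - aEntry a (i.val + 2)) •
          Finsupp.single (a - Pi.single i 1) 1)
    (hF1 : ∀ (i : Fin (N - 1)) (a : Fin (N - 1) → ℤ), i.val = 0 →
      F i (Finsupp.single a 1) =
        ((X * t ^ (-aEntry a 1) - X⁻¹ * t ^ (aEntry a 1)) / (t - t⁻¹)) •
          Finsupp.single (a + Pi.single i 1) 1)
    (hFi : ∀ (i : Fin (N - 1)) (a : Fin (N - 1) → ℤ), 1 ≤ i.val →
      F i (Finsupp.single a 1) =
        qint t (aEntry a i.val - aEntry a (i.val + 1)) •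
          Finsupp.single (a + Pi.single i 1) 1)
    (hK1 : ∀ (i : Fin (N - 1)) (a : Fin (N - 1) → ℤ), i.val = 0 →
      Kop i (Finsupp.single a 1) =
        (X * t ^ (aEntry a 2 - 2 * aEntry a 1)) • Finsupp.single a 1)
    (hKi : ∀ (i : Fin (N - 1)) (a : Fin (N - 1) → ℤ), 1 ≤ i.val →
      Kop i (Finsupp.single a 1) =
        t ^ (aEntry a i.val + aEntry a (i.val + 2) - 2 * aEntry a (i.val + 1)) •
          Finsupp.single a 1)
    (hKinv1 : ∀ (i : Fin (N - 1)) (a : Fin (N - 1) → ℤ), i.val = 0 →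
      Kinv i (Finsupp.single a 1) =
        (X * t ^ (aEntry a 2 - 2 * aEntry a 1))⁻¹ • Finsupp.single a 1)
    (hKinvi : ∀ (i : Fin (N - 1)) (a : Fin (N - 1) → ℤ), 1 ≤ i.val →
      Kinv i (Finsupp.single a 1) =
        t ^ (-(aEntry a i.val + aEntry a (i.val + 2) - 2 * aEntry a (i.val + 1))) •
          Finsupp.single a 1) :
    (∀ i, IsUnit (Kop i)) ∧
    (∀ i j, Kop i * Kop j = Kop j * Kop i) ∧
    (∀ i j, Kop i * E j * Kinv i = t ^ (cartanSlN i j) • E j) ∧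
    (∀ i j, Kop i * F j * Kinv i = t ^ (-cartanSlN i j) • F j) := by
  set κ : Fin (N-1) → (Fin (N-1) → ℤ) → K :=
    fun i a => (if i.val = 0 then X else 1) * t ^ wfun i a with hκdef
  have hκ0 : ∀ i a, κ i a ≠ 0 := by
    intro i a
    apply mul_ne_zero
    · split_ifs <;> simp [hX]
    · exact zpow_ne_zero _ ht
  have hκ : ∀ i a, Kop i (Finsupp.single a 1) = κ i a • Finsupp.single a 1 := by
    intro i a
    by_cases h : i.val = 0
    · rw [hK1 i a h, hκdef]; simp only [wfun, if_pos h]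
    · rw [hKi i a (by omega), hκdef]; simp only [wfun, if_neg h, one_mul]
  have hκinv : ∀ i a, Kinv i (Finsupp.single a 1) = (κ i a)⁻¹ • Finsupp.single a 1 := by
    intro i a
    by_cases h : i.val = 0
    · rw [hKinv1 i a h, hκdef]; simp only [wfun, if_pos h]
    · rw [hKinvi i a (by omega), hκdef]
      simp only [wfun, if_neg h, one_mul]
      rw [zpow_neg]
  have hrel : ∀ i j (a : Fin (N-1) → ℤ),
      κ i (a - Pi.single j 1) = t ^ cartanSlN i j * κ i a := by
    intro i j a
    simp only [hκdef, w_sub, zpow_add₀ ht]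
    ring
  have hrel' : ∀ i j (a : Fin (N-1) → ℤ),
      κ i (a + Pi.single j 1) = t ^ (-cartanSlN i j) * κ i a := by
    intro i j a
    have h := hrel i j (a + Pi.single j 1)
    rw [add_sub_cancel_right] at h
    rw [h, zpow_neg, ← mul_assoc, inv_mul_cancel₀ (zpow_ne_zero _ ht), one_mul]
  have hF' : ∀ (j : Fin (N-1)) a, ∃ μ : K,
      F j (Finsupp.single a 1) = μ • Finsupp.single (a + Pi.single j 1) 1 := by
    intro j a
    by_cases h : j.val = 0
    · exact ⟨_, hF1 j a h⟩
    · exact ⟨_, hFi j a (by omega)⟩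
  have ext1 : ∀ (f g : Module.End K ((Fin (N-1) → ℤ) →₀ K)),
      (∀ a, f (Finsupp.single a 1) = g (Finsupp.single a 1)) → f = g := by
    intro f g h
    apply Finsupp.basisSingleOne.ext
    intro a
    simpa using h a
  refine ⟨?_, ?_, ?_, ?_⟩
  · intro i
    refine isUnit_iff_exists.mpr ⟨Kinv i, ?_, ?_⟩
    · apply ext1; intro a
      rw [Module.End.mul_apply, hκinv, map_smul, hκ, smul_smul,
        inv_mul_cancel₀ (hκ0 i a), one_smul, Module.End.one_apply]
    · apply ext1; intro a
      rw [Module.End.mul_apply, hκ, map_smul, hκinv, smul_smul,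
        mul_inv_cancel₀ (hκ0 i a), one_smul, Module.End.one_apply]
  · intro i j
    apply ext1; intro a
    rw [Module.End.mul_apply, Module.End.mul_apply, hκ, map_smul, hκ, map_smul, hκ,
      smul_smul, smul_smul, mul_comm (κ i a)]
  · intro i j
    apply ext1; intro a
    rw [Module.End.mul_apply, Module.End.mul_apply, hκinv, map_smul, hE, map_smul, map_smul, hκ,
      hrel, LinearMap.smul_apply, hE]
    simp only [smul_smul]
    congr 1
    field_simp [hκ0 i a]
  · intro i j
    apply ext1; intro a
    obtain ⟨μ, hμ⟩ := hF' j a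
    rw [Module.End.mul_apply, Module.End.mul_apply, hκinv, map_smul, hμ, map_smul, map_smul, hκ,
      hrel', LinearMap.smul_apply, hμ]
    simp only [smul_smul]
    congr 1
    field_simp [hκ0 i a]
end

section
/- Let K be a field, N ≥ 2 an integer, and t, X nonzero elements of K with t^2 ≠ 1. Write [n] = (t^n − t^{−n})/(t − t^{−1}) for n ∈ ℤ. Let V be the free K-vector space with basis {v_a : a ∈ ℤ^{N−1}}, with the convention a_N := 0, and define operators E_i, F_i (1 ≤ i ≤ N−1) by: E_i v_a = [a_i − a_{i+1}] v_{a − e_i}; F_1 v_a = ((X t^{−a_1} − X^{−1} t^{a_1})/(t − t^{−1})) v_{a + e_1} and F_i v_a = [a_{i−1} − a_i] v_{a + e_i} for i ≥ 2. Then the quantum Serre relations hold: whenever |i − j| = 1, E_i^2 E_j − (t + t^{−1}) E_i E_j E_i + E_j E_i^2 = 0 and F_i^2 F_j − (t + t^{−1}) F_i F_j F_i + F_j F_i^2 = 0; and whenever |i − j| > 1, E_i E_j = E_j E_i, F_i F_j = F_j F_i, and E_i F_j = F_j E_i. -/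
open Finsupp

lemma qint_add_one_add_qint_sub_one {K : Type*} [Field K] (t : K) (n : ℤ) :
    qint t (n + 1) + qint t (n - 1) = (t + t⁻¹) * qint t n := by
  rcases eq_or_ne t 0 with rfl | ht
  · simp [qint]
  simp only [qint, zpow_neg, zpow_add_one₀ ht, zpow_sub_one₀ ht, mul_inv, inv_inv]
  ring

def IsWeightedShift {R M : Type*} [CommRing R] [AddCommMonoid M]
    (T : Module.End R (M →₀ R)) (d : M) (c : M → R) : Prop :=
  ∀ a, T (single a 1) = c a • single (a + d) 1

namespace IsWeightedShift

section CommRing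

variable {R M : Type*} [CommRing R] [AddCommMonoid M]
  {S T : Module.End R (M →₀ R)} {d e : M} {c w : M → R}

lemma zero (d : M) : IsWeightedShift (0 : Module.End R (M →₀ R)) d 0 := fun a => by
  rw [LinearMap.zero_apply, Pi.zero_apply, zero_smul]

lemma add (hS : IsWeightedShift S d c) (hT : IsWeightedShift T d w) :
    IsWeightedShift (S + T) d (c + w) := fun a => by
  rw [LinearMap.add_apply, hS, hT, Pi.add_apply, add_smul]

lemma sub (hS : IsWeightedShift S d c) (hT : IsWeightedShift T d w) :
    IsWeightedShift (S - T) d (c - w) := fun a => by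
  rw [LinearMap.sub_apply, hS, hT, Pi.sub_apply, sub_smul]

lemma smul (r : R) (hS : IsWeightedShift S d c) : IsWeightedShift (r • S) d (r • c) :=
  fun a => by rw [LinearMap.smul_apply, hS, smul_smul, Pi.smul_apply, smul_eq_mul]

lemma mul (hS : IsWeightedShift S d c) (hT : IsWeightedShift T e w) :
    IsWeightedShift (S * T) (e + d) fun a => w a * c (a + e) := fun a => by
  rw [Module.End.mul_apply, hT, map_smul, hS, smul_smul, add_assoc]

lemma eq (hS : IsWeightedShift S d c) (hT : IsWeightedShift T d w) (h : ∀ a, c a = w a) :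
    S = T :=
  (Finsupp.basisSingleOne (R := R)).ext fun a => by rw [coe_basisSingleOne, hS, hT, h]

lemma commute (hS : IsWeightedShift S d c) (hT : IsWeightedShift T e w)
    (hc : ∀ a, c (a + e) = c a) (hw : ∀ a, w (a + d) = w a) : Commute S T :=
  (hS.mul hT).eq (add_comm d e ▸ hT.mul hS) fun a => by rw [hc, hw, mul_comm]

lemma serre (hS : IsWeightedShift S d c) (hT : IsWeightedShift T e w) (r : R)
    (h : ∀ a, w a * c (a + e) * c (a + e + d) - r * (c a * w (a + d) * c (a + d + e))
      + c a * c (a + d) * w (a + d + d) = 0) :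
    S * S * T - r • (S * T * S) + T * (S * S) = 0 := by
  have hSST := (hS.mul hS).mul hT
  have hSTS := (hS.mul hT).mul hS
  have hTSS := hT.mul (hS.mul hS)
  rw [show d + (e + d) = e + (d + d) by abel] at hSTS
  rw [show d + d + e = e + (d + d) by abel] at hTSS
  refine ((hSST.sub (hSTS.smul r)).add hTSS).eq (zero _) fun a => ?_
  simp only [Pi.add_apply, Pi.sub_apply, Pi.smul_apply, Pi.zero_apply, smul_eq_mul,
    ← add_assoc]
  linear_combination h a

end CommRing

section Field

variable {K M : Type*} [Field K] [AddCommMonoid M] {t : K}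
  {S T : Module.End K (M →₀ K)} {d e : M} {c w : M → K}

lemma serre_of_coeff_qint_left {φ : M → ℤ}
    (hS : IsWeightedShift S d fun a => qint t (φ a)) (hT : IsWeightedShift T e w)
    (hφd : ∀ a, φ (a + d) = φ a - 1) (hφe : ∀ a, φ (a + e) = φ a + 1)
    (hw : ∀ a, w (a + d) = w a) :
    S * S * T - (t + t⁻¹) • (S * T * S) + T * (S * S) = 0 :=
  hS.serre hT _ fun a => by
    simp only [hφd, hφe, hw, sub_add_cancel, add_sub_cancel_right]
    linear_combination (w a * qint t (φ a)) * qint_add_one_add_qint_sub_one t (φ a)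

lemma serre_of_coeff_qint_right {ψ : M → ℤ}
    (hS : IsWeightedShift S d c) (hT : IsWeightedShift T e fun a => qint t (ψ a))
    (hψ : ∀ a, ψ (a + d) = ψ a + 1) (hc : ∀ a, c (a + e) = c a) :
    S * S * T - (t + t⁻¹) • (S * T * S) + T * (S * S) = 0 :=
  hS.serre hT _ fun a => by
    have hrec := qint_add_one_add_qint_sub_one t (ψ a + 1)
    rw [add_sub_cancel_right] at hrec
    rw [add_right_comm a e d]
    simp only [hc, hψ]
    linear_combination (c a * c (a + d)) * hrec

end Field

end IsWeightedShift

section Verma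

variable {K : Type*} [Field K] {n : ℕ}

lemma aEntry_add_single (a : Fin n → ℤ) (k : Fin n) (x : ℤ) (m : ℕ) :
    aEntry (a + Pi.single k x) m = aEntry a m + if m = k.val + 1 then x else 0 := by
  unfold aEntry
  by_cases hm : 1 ≤ m ∧ m ≤ n
  · have hk : (⟨m - 1, by omega⟩ : Fin n) = k ↔ m = k.val + 1 := by
      simp only [Fin.ext_iff]; omega
    simp only [dif_pos hm, Pi.add_apply, Pi.single_apply, hk]
  · have hk : m ≠ k.val + 1 := by have := k.isLt; omega
    simp only [dif_neg hm, if_neg hk, add_zero]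

def aDiff (a : Fin n → ℤ) (m : ℕ) : ℤ := aEntry a m - aEntry a (m + 1)

section Shift

variable {a : Fin n → ℤ} {k : Fin n} {x : ℤ} {m : ℕ}

lemma aDiff_add_single_of_ne (h₁ : m ≠ k.val + 1) (h₂ : m ≠ k.val) :
    aDiff (a + Pi.single k x) m = aDiff a m := by
  simp only [aDiff, aEntry_add_single, if_neg h₁, if_neg (by omega : m + 1 ≠ k.val + 1),
    add_zero]

lemma aDiff_add_single_succ :
    aDiff (a + Pi.single k x) (k.val + 1) = aDiff a (k.val + 1) + x := by
  simp only [aDiff, aEntry_add_single, if_pos, if_neg (by omega : k.val + 1 + 1 ≠ k.val + 1)]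
  ring

lemma aDiff_add_single_self : aDiff (a + Pi.single k x) k.val = aDiff a k.val - x := by
  simp only [aDiff, aEntry_add_single, if_pos, if_neg (by omega : k.val ≠ k.val + 1)]
  ring

end Shift

/-- The coefficient of `F_{i+1}` in the paper's 1-based numbering: `i = 0` is the special `F_1`. -/
noncomputable def vermaFCoeff (t X : K) (i : ℕ) (a : Fin n → ℤ) : K :=
  if i = 0 then (X * t ^ (-aEntry a 1) - X⁻¹ * t ^ aEntry a 1) / (t - t⁻¹)
  else qint t (aDiff a i)

lemma vermaFCoeff_of_ne_zero {t X : K} {i : ℕ} (hi : i ≠ 0) :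
    vermaFCoeff (n := n) t X i = fun a => qint t (aDiff a i) :=
  funext fun _ => if_neg hi

lemma vermaFCoeff_add_single_of_ne {t X : K} {i : ℕ} {a : Fin n → ℤ} {k : Fin n} {x : ℤ}
    (h₁ : i ≠ k.val + 1) (h₂ : i ≠ k.val) :
    vermaFCoeff t X i (a + Pi.single k x) = vermaFCoeff t X i a := by
  unfold vermaFCoeff
  split_ifs with hi
  · rw [aEntry_add_single, if_neg (by omega), add_zero]
  · rw [aDiff_add_single_of_ne h₁ h₂]

variable {t X : K} {E F : Fin n → Module.End K ((Fin n → ℤ) →₀ K)}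

lemma verma_E_serre
    (hE : ∀ i, IsWeightedShift (E i) (Pi.single i (-1)) fun a => qint t (aDiff a (i.val + 1)))
    {i j : Fin n} (hij : j.val = i.val + 1 ∨ i.val = j.val + 1) :
    E i * E i * E j - (t + t⁻¹) • (E i * E j * E i) + E j * (E i * E i) = 0 := by
  rcases hij with hij | hij
  · refine (hE i).serre_of_coeff_qint_left (hE j) (fun a => ?_) (fun a => ?_) (fun a => ?_)
    · rw [aDiff_add_single_succ]; ring
    · rw [← hij, aDiff_add_single_self]; ring
    · rw [aDiff_add_single_of_ne] <;> omega
  · refine (hE i).serre_of_coeff_qint_right (hE j) (fun a => ?_) (fun a => ?_)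
    · rw [← hij, aDiff_add_single_self]; ring
    · rw [aDiff_add_single_of_ne] <;> omega

lemma verma_F_serre (hF : ∀ i, IsWeightedShift (F i) (Pi.single i 1) (vermaFCoeff t X i.val))
    {i j : Fin n} (hij : j.val = i.val + 1 ∨ i.val = j.val + 1) :
    F i * F i * F j - (t + t⁻¹) • (F i * F j * F i) + F j * (F i * F i) = 0 := by
  rcases hij with hij | hij
  · have hFj := hF j
    rw [vermaFCoeff_of_ne_zero (by omega)] at hFj
    refine (hF i).serre_of_coeff_qint_right hFj (fun a => ?_) (fun a => ?_)
    · rw [hij, aDiff_add_single_succ]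
    · rw [vermaFCoeff_add_single_of_ne] <;> omega
  · have hFi := hF i
    rw [vermaFCoeff_of_ne_zero (by omega)] at hFi
    refine hFi.serre_of_coeff_qint_left (hF j) (fun a => ?_) (fun a => ?_) (fun a => ?_)
    · rw [aDiff_add_single_self]
    · rw [hij, aDiff_add_single_succ]
    · rw [vermaFCoeff_add_single_of_ne] <;> omega

lemma verma_commute_of_nonadjacent
    (hE : ∀ i, IsWeightedShift (E i) (Pi.single i (-1)) fun a => qint t (aDiff a (i.val + 1)))
    (hF : ∀ i, IsWeightedShift (F i) (Pi.single i 1) (vermaFCoeff t X i.val))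
    {i j : Fin n} (hij : i.val + 1 < j.val ∨ j.val + 1 < i.val) :
    Commute (E i) (E j) ∧ Commute (F i) (F j) ∧ Commute (E i) (F j) := by
  refine ⟨(hE i).commute (hE j) (fun a => ?_) (fun a => ?_),
    (hF i).commute (hF j) (fun a => ?_) (fun a => ?_),
    (hE i).commute (hF j) (fun a => ?_) (fun a => ?_)⟩
  all_goals first
    | rw [aDiff_add_single_of_ne] <;> omega
    | rw [vermaFCoeff_add_single_of_ne] <;> omega

end Verma

theorem verma_Serre_relations_general {K : Type*} [Field K] (N : ℕ) (t X : K)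
    (E F : Fin (N - 1) → Module.End K ((Fin (N - 1) → ℤ) →₀ K))
    (hE : ∀ (i : Fin (N - 1)) (a : Fin (N - 1) → ℤ),
      E i (Finsupp.single a 1) =
        qint t (aEntry a (i.val + 1) - aEntry a (i.val + 2)) •
          Finsupp.single (a - Pi.single i 1) 1)
    (hF1 : ∀ (i : Fin (N - 1)) (a : Fin (N - 1) → ℤ), i.val = 0 →
      F i (Finsupp.single a 1) =
        ((X * t ^ (-aEntry a 1) - X⁻¹ * t ^ (aEntry a 1)) / (t - t⁻¹)) •
          Finsupp.single (a + Pi.single i 1) 1)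
    (hFi : ∀ (i : Fin (N - 1)) (a : Fin (N - 1) → ℤ), 1 ≤ i.val →
      F i (Finsupp.single a 1) =
        qint t (aEntry a i.val - aEntry a (i.val + 1)) •
          Finsupp.single (a + Pi.single i 1) 1) :
    (∀ i j : Fin (N - 1), |(i.val : ℤ) - (j.val : ℤ)| = 1 →
      E i * E i * E j - (t + t⁻¹) • (E i * E j * E i) + E j * (E i * E i) = 0 ∧
      F i * F i * F j - (t + t⁻¹) • (F i * F j * F i) + F j * (F i * F i) = 0) ∧
    (∀ i j : Fin (N - 1), 1 < |(i.val : ℤ) - (j.val : ℤ)| →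
      E i * E j = E j * E i ∧ F i * F j = F j * F i ∧ E i * F j = F j * E i) := by
  have hEshift (i : Fin (N - 1)) :
      IsWeightedShift (E i) (Pi.single i (-1)) fun a => qint t (aDiff a (i.val + 1)) :=
    fun a => by rw [hE, Pi.single_neg, ← sub_eq_add_neg]; rfl
  have hFshift (i : Fin (N - 1)) : IsWeightedShift (F i) (Pi.single i 1) (vermaFCoeff t X i.val) :=
    fun a => by
      rcases Nat.eq_zero_or_pos i.val with hi | hi
      · rw [hF1 i a hi, vermaFCoeff, if_pos hi]
      · rw [hFi i a hi, vermaFCoeff_of_ne_zero hi.ne']; rfl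
  refine ⟨fun i j hij => ?_, fun i j hij => ?_⟩
  · have hadj : j.val = i.val + 1 ∨ i.val = j.val + 1 := by
      rcases (abs_eq zero_le_one).1 hij with h | h <;> omega
    exact ⟨verma_E_serre hEshift hadj, verma_F_serre hFshift hadj⟩
  · have hfar : i.val + 1 < j.val ∨ j.val + 1 < i.val := by
      rcases lt_abs.1 hij with h | h <;> omega
    obtain ⟨hEE, hFF, hEF⟩ := verma_commute_of_nonadjacent hEshift hFshift hfar
    exact ⟨hEE.eq, hFF.eq, hEF.eq⟩

/-- On the free module with basis `{v_a : a ∈ ℤ^{N-1}}` with the Verma-module actions of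
`E_i`, `F_i`, the quantum Serre relations hold: for `|i−j| = 1`,
`E_i² E_j − (t + t⁻¹) E_i E_j E_i + E_j E_i² = 0` (and likewise for `F`), and for
`|i−j| > 1` the operators `E_i, E_j` commute, `F_i, F_j` commute, and `E_i, F_j`
commute. -/
theorem verma_Serre_relations {K : Type*} [Field K] (N : ℕ) (hN : 2 ≤ N) (t X : K)
    (ht : t ≠ 0) (ht2 : t ^ 2 ≠ 1) (hX : X ≠ 0)
    (E F : Fin (N - 1) → Module.End K ((Fin (N - 1) → ℤ) →₀ K))
    (hE : ∀ (i : Fin (N - 1)) (a : Fin (N - 1) → ℤ),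
      E i (Finsupp.single a 1) =
        qint t (aEntry a (i.val + 1) - aEntry a (i.val + 2)) •
          Finsupp.single (a - Pi.single i 1) 1)
    (hF1 : ∀ (i : Fin (N - 1)) (a : Fin (N - 1) → ℤ), i.val = 0 →
      F i (Finsupp.single a 1) =
        ((X * t ^ (-aEntry a 1) - X⁻¹ * t ^ (aEntry a 1)) / (t - t⁻¹)) •
          Finsupp.single (a + Pi.single i 1) 1)
    (hFi : ∀ (i : Fin (N - 1)) (a : Fin (N - 1) → ℤ), 1 ≤ i.val →
      F i (Finsupp.single a 1) =
        qint t (aEntry a i.val - aEntry a (i.val + 1)) •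
          Finsupp.single (a + Pi.single i 1) 1) :
    (∀ i j : Fin (N - 1), |(i.val : ℤ) - (j.val : ℤ)| = 1 →
      E i * E i * E j - (t + t⁻¹) • (E i * E j * E i) + E j * (E i * E i) = 0 ∧
      F i * F i * F j - (t + t⁻¹) • (F i * F j * F i) + F j * (F i * F i) = 0) ∧
    (∀ i j : Fin (N - 1), 1 < |(i.val : ℤ) - (j.val : ℤ)| →
      E i * E j = E j * E i ∧ F i * F j = F j * F i ∧ E i * F j = F j * E i) :=
  verma_Serre_relations_general N t X E F hE hF1 hFi
end
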